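/- arXiv:1204.1559 — 4 statements merged into one kernel-verified Lean document; each statement's English description precedes it below -/
import Mathlib

section
/- If ρ is an order function on an F-algebra R, then {f ∈ R : ρ(f) ≤ ρ(1)} = F (the image of F in R under scalar inclusion). -/
/-- An order function on an `F`-algebra `R`: `ρ : R → ℕ₀ ∪ {-∞}` with
(1) `ρ f = -∞ ↔ f = 0`; (2) invariance under nonzero scalars;
(3) `ρ (f+g) ≤ max (ρ f) (ρ g)`, with equality when `ρ f ≠ ρ g`;
(4) `ρ f < ρ g` and `h ≠ 0` imply `ρ (f*h) < ρ (g*h)`;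
(5) `ρ f = ρ g ≠ -∞` implies `ρ (f - λ g) < ρ g` for some scalar `λ ≠ 0`. -/
def IsOrderFunction (F : Type*) {R : Type*} [Field F] [CommRing R] [Algebra F R]
    (ρ : R → WithBot ℕ) : Prop :=
  (∀ f : R, ρ f = ⊥ ↔ f = 0) ∧
  (∀ (l : F) (f : R), l ≠ 0 → ρ (l • f) = ρ f) ∧
  (∀ f g : R, ρ (f + g) ≤ max (ρ f) (ρ g)) ∧
  (∀ f g : R, ρ f ≠ ρ g → ρ (f + g) = max (ρ f) (ρ g)) ∧
  (∀ f g h : R, ρ f < ρ g → h ≠ 0 → ρ (f * h) < ρ (g * h)) ∧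
  (∀ f g : R, ρ f = ρ g → ρ g ≠ ⊥ → ∃ l : F, l ≠ 0 ∧ ρ (f - l • g) < ρ g)

/-- For an order function `ρ` on an `F`-algebra `R`, the set
`{f | ρ f ≤ ρ 1}` is exactly (the image in `R` of) `F`. -/
theorem orderFunction_le_one_eq_scalars {F R : Type*} [Field F] [CommRing R]
    [Algebra F R] (ρ : R → WithBot ℕ) (hρ : IsOrderFunction F ρ) :
    {f : R | ρ f ≤ ρ 1} = Set.range (algebraMap F R) := by
  obtain ⟨h1, h2, h3, h4, h5, h6⟩ := hρ
  -- no zero divisors (as seen by ρ)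
  have hzd : ∀ f h : R, f ≠ 0 → h ≠ 0 → f * h ≠ 0 := by
    intro f h hf hh
    have hlt : ρ 0 < ρ f := by
      rw [(h1 0).mpr rfl]
      exact Ne.bot_lt (fun e => hf ((h1 f).mp e))
    have := h5 0 f h hlt hh
    rw [zero_mul, (h1 0).mpr rfl] at this
    intro e
    rw [e, (h1 0).mpr rfl] at this
    exact lt_irrefl _ this
  -- no nonzero element has ρ strictly below ρ 1
  have hmin : ∀ f : R, f ≠ 0 → ¬ ρ f < ρ 1 := by
    intro f hf hlt
    have hpow : ∀ n : ℕ, f ^ n ≠ 0 := by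
      intro n
      induction n with
      | zero =>
        have := nontrivial_of_ne f 0 hf
        simp only [pow_zero]; exact (one_ne_zero : (1:R) ≠ 0)
      | succ n ih => rw [pow_succ]; exact hzd _ _ ih hf
    have hdesc : StrictAnti (fun n : ℕ => ρ (f ^ n)) := by
      apply strictAnti_nat_of_succ_lt
      intro n
      have := h5 f 1 (f ^ n) hlt (hpow n)
      simpa [pow_succ, mul_comm] using this
    have : WellFoundedGT ℕ := hdesc.wellFoundedGT
    obtain ⟨m, -, hm⟩ := this.wf.has_min Set.univ ⟨0, trivial⟩
    exact hm (m + 1) trivial (Nat.lt_succ_self m)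
  ext f
  simp only [Set.mem_setOf_eq, Set.mem_range]
  constructor
  · intro hle
    rcases eq_or_ne f 0 with rfl | hf
    · exact ⟨0, by simp⟩
    · have heq : ρ f = ρ 1 := le_antisymm hle (not_lt.mp (hmin f hf))
      have h1ne : ρ (1 : R) ≠ ⊥ := by
        rw [← heq]
        exact fun e => hf ((h1 f).mp e)
      obtain ⟨l, hl, hlt⟩ := h6 f 1 heq h1ne
      have : f - l • 1 = 0 := by
        by_contra hne
        exact hmin _ hne hlt
      exact ⟨l, by rw [Algebra.algebraMap_eq_smul_one]; exact (sub_eq_zero.mp this).symm⟩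
  · rintro ⟨l, rfl⟩
    rcases eq_or_ne l 0 with rfl | hl
    · simp [(h1 (0:R)).mpr rfl]
    · rw [Algebra.algebraMap_eq_smul_one, h2 l 1 hl]
end

section
/- The F-algebra R = F[x,y]/⟨xy - 1⟩ admits no order function. -/
namespace IsOrderFunction

variable {F R : Type*} [Field F] [CommRing R] [Algebra F R] {ρ : R → WithBot ℕ}

theorem apply_one_le (hρ : IsOrderFunction F ρ) {f : R} (hf : f ≠ 0) : ρ 1 ≤ ρ f := by
  obtain ⟨-, -, -, -, h_mul, -⟩ := hρ
  by_contra! hlt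
  have h_anti : StrictAnti fun n : ℕ ↦ ρ (f ^ n) := strictAnti_nat_of_succ_lt fun n ↦ by
    induction n with
    | zero => simpa using hlt
    | succ n ih => simpa only [pow_succ] using h_mul _ _ f ih hf
  exact not_strictAnti_of_wellFoundedLT _ h_anti

theorem apply_eq_apply_one_of_isUnit (hρ : IsOrderFunction F ρ) {u : R} (hu : IsUnit u) :
    ρ u = ρ 1 := by
  nontriviality R using Subsingleton.elim u 1
  have h_low : ∀ {g : R}, g ≠ 0 → ρ 1 ≤ ρ g := hρ.apply_one_le
  obtain ⟨-, -, -, -, h_mul, -⟩ := hρ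
  obtain ⟨v, huv⟩ := hu.exists_right_inv
  have hv : v ≠ 0 := right_ne_zero_of_mul_eq_one huv
  refine le_antisymm (not_lt.1 fun hlt ↦ ?_) (h_low hu.ne_zero)
  have h_inv : ρ v < ρ 1 := by simpa only [one_mul, huv] using h_mul 1 u v hlt hv
  exact (h_low hv).not_gt h_inv

theorem mem_range_algebraMap_of_apply_eq (hρ : IsOrderFunction F ρ) {f : R} (hf : ρ f = ρ 1) :
    f ∈ Set.range (algebraMap F R) := by
  have h_low : ∀ {g : R}, g ≠ 0 → ρ 1 ≤ ρ g := hρ.apply_one_le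
  obtain ⟨h_bot, -, -, -, -, h_sub⟩ := hρ
  by_cases h1 : ρ 1 = ⊥
  · exact ⟨0, by rw [map_zero, eq_comm, ← h_bot, hf, h1]⟩
  obtain ⟨l, -, hlt⟩ := h_sub f 1 hf h1
  refine ⟨l, by_contra fun hne ↦ ?_⟩
  have : f - l • 1 ≠ 0 := by rwa [sub_ne_zero, Algebra.smul_def, mul_one, ne_comm]
  exact (h_low this).not_gt hlt

theorem mem_range_algebraMap_of_isUnit (hρ : IsOrderFunction F ρ) {u : R} (hu : IsUnit u) :
    u ∈ Set.range (algebraMap F R) :=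
  hρ.mem_range_algebraMap_of_apply_eq (hρ.apply_eq_apply_one_of_isUnit hu)

end IsOrderFunction

open MvPolynomial LaurentPolynomial

theorem LaurentPolynomial.T_ne_C {R : Type*} [Semiring R] [Nontrivial R] {n : ℤ} (hn : n ≠ 0)
    (r : R) : T n ≠ C r := fun h ↦ by
  simpa [hn] using congrArg (fun p : R[T;T⁻¹] ↦ p.coeff n) h

abbrev LaurentQuotient (R : Type*) [CommRing R] : Type _ :=
  MvPolynomial (Fin 2) R ⧸ Ideal.span {(X 0 : MvPolynomial (Fin 2) R) * X 1 - 1}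

namespace LaurentQuotient

variable {R : Type*} [CommRing R]

theorem mk_X_zero_mul_mk_X_one :
    (Ideal.Quotient.mk _ (X 0) * Ideal.Quotient.mk _ (X 1) : LaurentQuotient R) = 1 := by
  rw [← map_mul, ← sub_eq_zero, ← map_one (Ideal.Quotient.mk _), ← map_sub,
    Ideal.Quotient.eq_zero_iff_mem]
  exact Ideal.mem_span_singleton_self _

noncomputable def toLaurentPolynomial : LaurentQuotient R →ₐ[R] R[T;T⁻¹] :=
  Ideal.Quotient.liftₐ _ (aeval ![T 1, T (-1)]) fun a ha ↦ by
    obtain ⟨q, rfl⟩ := Ideal.mem_span_singleton'.1 ha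
    simp only [map_mul, map_sub, map_one, aeval_X, Matrix.cons_val_zero, Matrix.cons_val_one,
      ← T_add, add_neg_cancel, T_zero, sub_self, mul_zero]

theorem toLaurentPolynomial_mk_X_zero :
    toLaurentPolynomial (Ideal.Quotient.mk _ (X 0) : LaurentQuotient R) = T 1 :=
  aeval_X ![T 1, T (-1)] 0

theorem mk_X_zero_notMem_range_algebraMap [Nontrivial R] :
    (Ideal.Quotient.mk _ (X 0) : LaurentQuotient R) ∉
      Set.range (algebraMap R (LaurentQuotient R)) := by
  rintro ⟨r, hr⟩
  apply T_ne_C one_ne_zero r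
  rw [← toLaurentPolynomial_mk_X_zero, ← hr, AlgHom.commutes]
  exact (LaurentPolynomial.C_eq_algebraMap r).symm

end LaurentQuotient

open MvPolynomial in
/-- The `F`-algebra `F[x,y]/⟨xy - 1⟩` admits no order function. -/
theorem no_orderFunction_on_laurent {F : Type*} [Field F] :
    ¬ ∃ ρ : (MvPolynomial (Fin 2) F ⧸
        Ideal.span {(X 0 : MvPolynomial (Fin 2) F) * X 1 - 1}) → WithBot ℕ,
      IsOrderFunction F ρ := by
  rintro ⟨ρ, hρ⟩
  exact LaurentQuotient.mk_X_zero_notMem_range_algebraMap <| hρ.mem_range_algebraMap_of_isUnit <|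
    IsUnit.of_mul_eq_one _ LaurentQuotient.mk_X_zero_mul_mk_X_one
end

section
/- For y ∈ F_q^n, let D(y) be the diagonal matrix with the entries of y on the diagonal, and let H be an N×n matrix of rank n over F_q. Then the syndrome matrix S(y) = H D(y) Hᵀ has rank equal to the Hamming weight of y. -/
lemma rank_mul_eq_of_injective {F : Type*} [Field F] {N n m : ℕ}
    (H : Matrix (Fin N) (Fin n) F) (hH : Function.Injective H.mulVecLin)
    (B : Matrix (Fin n) (Fin m) F) : (H * B).rank = B.rank := by
  rw [Matrix.rank, Matrix.rank, Matrix.mulVecLin_mul, LinearMap.range_comp]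
  exact (LinearEquiv.finrank_eq
    (Submodule.equivMapOfInjective _ hH (LinearMap.range B.mulVecLin))).symm

/-- For `y ∈ F_q^n` and an `N × n` matrix `H` over `F_q` of rank `n`, the
syndrome matrix `S(y) = H D(y) Hᵀ` (with `D(y)` the diagonal matrix of `y`)
has rank equal to the Hamming weight of `y`. -/
theorem syndrome_matrix_rank {F : Type*} [Field F] [Fintype F] [DecidableEq F]
    {N n : ℕ} (H : Matrix (Fin N) (Fin n) F) (hH : H.rank = n) (y : Fin n → F) :
    (H * Matrix.diagonal y * H.transpose).rank = hammingNorm y := by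
  have hinj : Function.Injective H.mulVecLin := by
    rw [← LinearMap.ker_eq_bot]
    have hrn : Module.finrank F (LinearMap.range H.mulVecLin) = n := hH
    have := H.mulVecLin.finrank_range_add_finrank_ker
    rw [hrn] at this
    simp only [Module.finrank_pi, Fintype.card_fin] at this
    have hker : Module.finrank F (LinearMap.ker H.mulVecLin) = 0 := by omega
    exact Submodule.finrank_eq_zero.mp hker
  rw [Matrix.mul_assoc, rank_mul_eq_of_injective H hinj,
    ← Matrix.rank_transpose, Matrix.transpose_mul, Matrix.transpose_transpose,
    Matrix.diagonal_transpose, rank_mul_eq_of_injective H hinj,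
    Matrix.rank_diagonal]
  rw [hammingNorm]
  simp [Fintype.card_subtype, Finset.filter_congr_decidable]
end

section
/- Let R = F_q[x_1,...,x_m]/I with a weight function ρ whose value semigroup is enumerated increasingly as (ρ_i), and let P be a set of n points of V(I). Define E_l = {ev_P(f) : f ∈ R, ρ(f) ≤ ρ_l}. Then the minimum distance of the evaluation code E_l is at least n - ρ_l, and if ρ_l < n then dim_{F_q}(E_l) = l. -/
/-- A weight function is an order function additionally satisfying
multiplicativity: the value of a product is the sum of the values. -/
def IsWeightFunction (F : Type*) {R : Type*} [Field F] [CommRing R] [Algebra F R]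
    (ρ : R → WithBot ℕ) : Prop :=
  IsOrderFunction F ρ ∧ ∀ f g : R, ρ (f * g) = ρ f + ρ g


/-!
The heart of the matter is that a nonzero `f` has at most `ρ f` zeros among the points. Call `γ`
a gap of a finite set `Z` of points if `γ` is a value of `ρ`, but not the value of any function
vanishing on `Z`. Adding a point `j ∉ Z` creates a new gap: the least value of a function
vanishing on `Z` but not at `j` (any function vanishing on `Z ∪ {j}` with the same value could be
used, via axiom (5), to lower it). So `Z` has at least `#Z` gaps. If `f` vanishes on `Z` and
`ρ f = s`, then `s + γ = ρ (f g)` is not a gap for any value `γ = ρ g`; and a subset of the value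
semigroup `Γ` avoiding `s + Γ` has at most `s` elements, as they are pairwise incongruent mod `s`.

The distance bound is then a count of zeros. For the dimension: functions with pairwise distinct
values are linearly independent, `L_l` is spanned by `l` of them, and `ev` is injective on `L_l`
when `ρ_l < n`.
-/

open Finset

theorem card_le_of_subset_diff_shift {Γ : Set ℕ} {s : ℕ} (hΓ : ∀ γ ∈ Γ, s + γ ∈ Γ)
    {A : Finset ℕ} (hA : (A : Set ℕ) ⊆ Γ \ (s + ·) '' Γ) : #A ≤ s := by
  have hshift : ∀ γ ∈ Γ, ∀ k, γ + s * k ∈ Γ := by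
    intro γ hγ k
    induction k with
    | zero => simpa
    | succ k ih => simpa [Nat.mul_succ, add_assoc, add_comm s] using hΓ _ ih
  have hmod : ∀ a ∈ A, ∀ b ∈ A, a ≤ b → a % s = b % s → a = b := by
    intro a ha b hb hab hmod
    obtain ⟨k, hk⟩ : s ∣ b - a := (Nat.modEq_iff_dvd' hab).mp hmod
    cases k with
    | zero => omega
    | succ k =>
      refine absurd ⟨a + s * k, hshift a (hA ha).1 k, ?_⟩ (hA hb).2
      rw [Nat.mul_succ] at hk
      show s + (a + s * k) = b
      omega
  have hs : ∀ a ∈ A, 0 < s := fun a ha =>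
    Nat.pos_of_ne_zero fun hs => (hA ha).2 ⟨a, (hA ha).1, by simp [hs]⟩
  calc #A ≤ #(range s) := card_le_card_of_injOn (· % s)
        (fun a ha => mem_range.mpr (Nat.mod_lt _ (hs a ha)))
        (fun a ha b hb hab => (le_total a b).elim (hmod a ha b hb · hab)
          fun hba => (hmod b hb a ha hba hab.symm).symm)
    _ = s := card_range s

namespace IsOrderFunction

variable {F R : Type*} [Field F] [CommRing R] [Algebra F R] {ρ : R → WithBot ℕ}

theorem map_zero (hρ : IsOrderFunction F ρ) : ρ 0 = ⊥ := (hρ.1 0).2 rfl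

theorem exists_eq_coe (hρ : IsOrderFunction F ρ) {f : R} (hf : f ≠ 0) : ∃ v : ℕ, ρ f = v :=
  WithBot.ne_bot_iff_exists.mp (mt (hρ.1 f).1 hf) |>.imp fun _ => Eq.symm

theorem map_smul_le (hρ : IsOrderFunction F ρ) (a : F) (f : R) : ρ (a • f) ≤ ρ f := by
  rcases eq_or_ne a 0 with rfl | ha
  · simp [hρ.map_zero]
  · exact (hρ.2.1 a f ha).le

/-- The paper's `L_l` is `sublevel ρ_l`. -/
def sublevel (hρ : IsOrderFunction F ρ) (c : WithBot ℕ) : Submodule F R where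
  carrier := {f | ρ f ≤ c}
  add_mem' ha hb := (hρ.2.2.1 _ _).trans (max_le ha hb)
  zero_mem' := show ρ 0 ≤ c by rw [hρ.map_zero]; exact bot_le
  smul_mem' a _ hf := (hρ.map_smul_le a _).trans hf

theorem map_sum_of_injOn (hρ : IsOrderFunction F ρ) {ι : Type*} {s : Finset ι} {g : ι → R}
    (hg : Set.InjOn (ρ ∘ g) s) : ρ (∑ i ∈ s, g i) = s.sup (ρ ∘ g) := by
  classical
  induction s using Finset.induction_on with
  | empty => simp [hρ.map_zero]
  | insert a s ha ih =>
    rw [Finset.sum_insert ha, Finset.sup_insert, ← ih (hg.mono (by simp))]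
    rcases s.eq_empty_or_nonempty with rfl | hs
    · simp [hρ.map_zero]
    refine hρ.2.2.2.1 _ _ fun heq => ?_
    obtain ⟨i, hi, hsup⟩ := s.exists_mem_eq_sup hs (ρ ∘ g)
    rw [ih (hg.mono (by simp)), hsup] at heq
    exact ha (hg (by simp) (by simp [hi]) heq ▸ hi)

theorem linearIndependent (hρ : IsOrderFunction F ρ) {ι : Type*} {g : ι → R}
    (hg : ∀ i, g i ≠ 0) (hinj : Function.Injective (ρ ∘ g)) : LinearIndependent F g := by
  classical
  rw [linearIndependent_iff']
  intro s c hsum i hi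
  by_contra hci
  set t := s.filter (c · ≠ 0)
  have hρt : ∀ j ∈ t, ρ (c j • g j) = ρ (g j) := fun j hj => hρ.2.1 _ _ (mem_filter.mp hj).2
  have hinjOn : Set.InjOn (fun j => ρ (c j • g j)) t := fun j hj k hk h =>
    hinj (by simpa [hρt j hj, hρt k hk] using h)
  have hsup := hρ.map_sum_of_injOn hinjOn
  rw [Finset.sum_filter_of_ne (fun j _ h => left_ne_zero_of_smul h), hsum, hρ.map_zero, eq_comm,
    Finset.sup_eq_bot_iff] at hsup
  have hit : i ∈ t := mem_filter.mpr ⟨hi, hci⟩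
  exact hg i ((hρ.1 _).mp (hρt i hit ▸ hsup i hit))

theorem sublevel_le_span (hρ : IsOrderFunction F ρ) {c : WithBot ℕ} {S : Set R}
    (hS : ∀ f ≠ 0, ρ f ≤ c → ∃ g ∈ S, ρ g = ρ f) : hρ.sublevel c ≤ Submodule.span F S := by
  intro f
  induction hf : ρ f using WellFoundedLT.induction generalizing f with
  | _ v ih =>
    intro hfc
    rcases eq_or_ne f 0 with rfl | hf0
    · exact Submodule.zero_mem _
    obtain ⟨g, hgS, hg⟩ := hS f hf0 hfc
    obtain ⟨a, -, hlt⟩ := hρ.2.2.2.2.2 f g hg.symm (hg ▸ mt (hρ.1 f).1 hf0)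
    have hrest := ih _ (hf ▸ hg ▸ hlt) rfl ((hg ▸ hlt).le.trans hfc)
    simpa using Submodule.add_mem _ hrest (Submodule.smul_mem _ a (Submodule.subset_span hgS))

theorem finrank_span_image_sublevel (hρ : IsOrderFunction F ρ) {V : Type*} [AddCommGroup V]
    [Module F V] (φ : R →ₗ[F] V) {c : WithBot ℕ} (hφ : ∀ f, ρ f ≤ c → φ f = 0 → f = 0)
    {l : ℕ} {g : Fin l → R} (hg0 : ∀ k, g k ≠ 0) (hinj : Function.Injective (ρ ∘ g))
    (hgc : ∀ k, ρ (g k) ≤ c) (hcover : ∀ f ≠ 0, ρ f ≤ c → ∃ k, ρ (g k) = ρ f) :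
    Module.finrank F (Submodule.span F (φ '' {f | ρ f ≤ c})) = l := by
  have hspan : hρ.sublevel c = Submodule.span F (Set.range g) :=
    le_antisymm (hρ.sublevel_le_span fun f hf hfc =>
      let ⟨k, hk⟩ := hcover f hf hfc; ⟨g k, ⟨k, rfl⟩, hk⟩)
      (Submodule.span_le.mpr (Set.range_subset_iff.mpr hgc))
  have hdisj : Disjoint (Submodule.span F (Set.range g)) (LinearMap.ker φ) :=
    Submodule.disjoint_def.mpr fun f hf hker => hφ f (hspan.ge hf) hker
  have hind := (hρ.linearIndependent hg0 hinj).map hdisj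
  calc Module.finrank F (Submodule.span F (φ '' {f | ρ f ≤ c}))
      = Module.finrank F (Submodule.span F (Set.range (φ ∘ g))) := by
        rw [show {f | ρ f ≤ c} = (hρ.sublevel c : Set R) from rfl, Submodule.span_image,
          Submodule.span_eq, hspan, Set.range_comp, Submodule.span_image]
    _ = l := by rw [finrank_span_eq_card hind, Fintype.card_fin]

theorem exists_family_enumerating_sublevel (hρ : IsOrderFunction F ρ) {ρs : ℕ → ℕ}
    (hρs : StrictMonoOn ρs {i | 1 ≤ i})
    (hrange : {x : ℕ | ∃ f : R, f ≠ 0 ∧ ρ f = (x : WithBot ℕ)} = ρs '' {i | 1 ≤ i})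
    {l : ℕ} (hl : 1 ≤ l) :
    ∃ g : Fin l → R, (∀ k, g k ≠ 0) ∧ Function.Injective (ρ ∘ g) ∧ (∀ k, ρ (g k) ≤ ρs l) ∧
      ∀ f ≠ 0, ρ f ≤ ρs l → ∃ k, ρ (g k) = ρ f := by
  have hvalue (k : Fin l) : ∃ g, g ≠ 0 ∧ ρ g = (ρs (k + 1) : WithBot ℕ) := by
    have hk : ρs (k + 1) ∈ ρs '' {i | 1 ≤ i} := ⟨k + 1, Nat.le_add_left 1 k, rfl⟩
    rwa [← hrange] at hk
  choose g hg0 hgρ using hvalue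
  refine ⟨g, hg0, fun a b hab => ?_, fun k => ?_, fun f hf hfl => ?_⟩
  · simp only [Function.comp_apply, hgρ] at hab
    exact Fin.ext (Nat.succ_injective (hρs.injOn (by simp) (by simp) (mod_cast hab)))
  · rw [hgρ, Nat.cast_le, hρs.le_iff_le (by simp) hl]
    omega
  · obtain ⟨v, hv⟩ := hρ.exists_eq_coe hf
    obtain ⟨i, hi, rfl⟩ : v ∈ ρs '' {i | 1 ≤ i} := hrange ▸ ⟨f, hf, hv⟩
    rw [hv, Nat.cast_le, hρs.le_iff_le hi hl] at hfl
    exact ⟨⟨i - 1, by omega⟩, by rw [hgρ, hv, Nat.sub_add_cancel hi]⟩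

end IsOrderFunction

section Vanishing

variable {F R ι : Type*} [Field F] [CommRing R] [Algebra F R]

def SeparatesFromFinsets (ev : R →ₐ[F] (ι → F)) : Prop :=
  ∀ (T : Finset ι) (j : ι), j ∉ T → ∃ g : R, (∀ i ∈ T, ev g i = 0) ∧ ev g j ≠ 0

/-- For `Z = ∅` this is the value semigroup of `ρ`. -/
def vanishingValues (ρ : R → WithBot ℕ) (ev : R →ₐ[F] (ι → F)) (Z : Set ι) : Set ℕ :=
  {v | ∃ g : R, (∀ i ∈ Z, ev g i = 0) ∧ ρ g = v}

variable {ρ : R → WithBot ℕ} {ev : R →ₐ[F] (ι → F)}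

theorem vanishingValues_anti {Z Z' : Set ι} (h : Z ⊆ Z') :
    vanishingValues ρ ev Z' ⊆ vanishingValues ρ ev Z :=
  fun _ ⟨g, hg, hv⟩ => ⟨g, fun i hi => hg i (h hi), hv⟩

theorem exists_mem_vanishingValues_diff (hρ : IsOrderFunction F ρ)
    (hsep : SeparatesFromFinsets ev) {Z : Finset ι} {j : ι} (hj : j ∉ Z) :
    ∃ v ∈ vanishingValues ρ ev Z, v ∉ vanishingValues ρ ev (insert j (Z : Set ι)) := by
  classical
  have hex : ∃ v : ℕ, ∃ g : R, (∀ i ∈ Z, ev g i = 0) ∧ ev g j ≠ 0 ∧ ρ g = v := by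
    obtain ⟨g, hgZ, hgj⟩ := hsep Z j hj
    obtain ⟨v, hv⟩ := hρ.exists_eq_coe (show g ≠ 0 by rintro rfl; simp at hgj)
    exact ⟨v, g, hgZ, hgj, hv⟩
  obtain ⟨g, hgZ, hgj, hgv⟩ := Nat.find_spec hex
  refine ⟨Nat.find hex, ⟨g, hgZ, hgv⟩, ?_⟩
  rintro ⟨g', hg'Z, hg'v⟩
  obtain ⟨a, -, hlt⟩ := hρ.2.2.2.2.2 g g' (hgv.trans hg'v.symm) (hg'v ▸ WithBot.coe_ne_bot)
  have hdiffj : ev (g - a • g') j ≠ 0 := by simpa [hg'Z j (Set.mem_insert _ _)] using hgj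
  obtain ⟨v, hv⟩ := hρ.exists_eq_coe (show g - a • g' ≠ 0 by
    rintro h; simp [h] at hdiffj)
  rw [hv, hg'v] at hlt
  refine Nat.find_min hex (WithBot.coe_lt_coe.mp hlt) ⟨g - a • g', fun i hi => ?_, hdiffj, hv⟩
  simp [hgZ i hi, hg'Z i (Set.mem_insert_of_mem _ hi)]

theorem exists_finset_subset_diff_vanishingValues (hρ : IsOrderFunction F ρ)
    (hsep : SeparatesFromFinsets ev) (Z : Finset ι) :
    ∃ A : Finset ℕ, #A = #Z ∧ (A : Set ℕ) ⊆ vanishingValues ρ ev ∅ \ vanishingValues ρ ev Z := by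
  classical
  induction Z using Finset.induction_on with
  | empty => exact ⟨∅, rfl, by simp⟩
  | insert j Z hj ih =>
    obtain ⟨A, hcard, hA⟩ := ih
    obtain ⟨v, hvZ, hvjZ⟩ := exists_mem_vanishingValues_diff hρ hsep hj
    have hvA : v ∉ A := fun h => (hA h).2 hvZ
    refine ⟨insert v A, by simp [hvA, hj, hcard], ?_⟩
    rw [Finset.coe_insert, Finset.coe_insert, Set.insert_subset_iff]
    exact ⟨⟨vanishingValues_anti (Set.empty_subset _) hvZ, hvjZ⟩,
      hA.trans (Set.sdiff_subset_sdiff_right (vanishingValues_anti (Set.subset_insert _ _)))⟩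

theorem card_le_of_forall_eval_eq_zero (hρ : IsWeightFunction F ρ)
    (hsep : SeparatesFromFinsets ev) {f : R} {s : ℕ} (hf : ρ f = s) {Z : Finset ι}
    (hZ : ∀ i ∈ Z, ev f i = 0) : #Z ≤ s := by
  obtain ⟨A, hcard, hA⟩ := exists_finset_subset_diff_vanishingValues hρ.1 hsep Z
  have hshift : (s + ·) '' vanishingValues ρ ev ∅ ⊆ vanishingValues ρ ev Z := by
    rintro _ ⟨γ, ⟨g, -, hg⟩, rfl⟩
    exact ⟨f * g, fun i hi => by simp [hZ i hi], by rw [hρ.2, hf, hg]; rfl⟩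
  refine hcard ▸ card_le_of_subset_diff_shift (fun γ hγ => ?_)
    (hA.trans (Set.sdiff_subset_sdiff_right hshift))
  exact vanishingValues_anti (Set.empty_subset _) (hshift ⟨γ, hγ, rfl⟩)

theorem card_sub_le_hammingNorm [Fintype ι] [DecidableEq F] (hρ : IsWeightFunction F ρ)
    (hsep : SeparatesFromFinsets ev) {f : R} (hf : f ≠ 0) {c : ℕ} (hfc : ρ f ≤ c) :
    Fintype.card ι - c ≤ hammingNorm (ev f) := by
  obtain ⟨s, hs⟩ := hρ.1.exists_eq_coe hf
  have hzeros := card_le_of_forall_eval_eq_zero hρ hsep hs (Z := {i | ev f i = 0}) (by simp)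
  have hsc : s ≤ c := by rw [hs] at hfc; exact WithBot.coe_le_coe.mp hfc
  have hcard := card_filter_add_card_filter_not (s := univ) (fun i => ev f i = 0)
  rw [card_univ] at hcard
  unfold hammingNorm
  simp only [ne_eq] at hcard ⊢
  omega

end Vanishing

theorem MvPolynomial.exists_eval_eq_zero_and_ne_zero {σ ι K : Type*} [CommRing K] [IsDomain K]
    {P : ι → σ → K} (hP : Function.Injective P) (T : Finset ι) {j : ι} (hj : j ∉ T) :
    ∃ p : MvPolynomial σ K, (∀ i ∈ T, eval (P i) p = 0) ∧ eval (P j) p ≠ 0 := by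
  have hcoord : ∀ i ∈ T, ∃ a, P i a ≠ P j a := fun i hi =>
    Function.ne_iff.mp (hP.ne (ne_of_mem_of_not_mem hi hj))
  choose a ha using hcoord
  refine ⟨∏ i ∈ T.attach, (X (a i i.2) - C (P i (a i i.2))), fun i hi => ?_, ?_⟩
  · simpa [Finset.prod_eq_zero_iff] using ⟨i, hi, by simp⟩
  · simpa [Finset.prod_eq_zero_iff, sub_eq_zero] using fun i hi => (ha i hi).symm

theorem separatesFromFinsets_of_injective {σ ι K : Type*} [Field K]
    {I : Ideal (MvPolynomial σ K)} {P : ι → σ → K} (hP : Function.Injective P)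
    (ev : (MvPolynomial σ K ⧸ I) →ₐ[K] (ι → K))
    (hev : ∀ f, ev (Ideal.Quotient.mk I f) = fun i => MvPolynomial.eval (P i) f) :
    SeparatesFromFinsets ev := fun T j hj => by
  obtain ⟨p, hpT, hpj⟩ := MvPolynomial.exists_eval_eq_zero_and_ne_zero hP T hj
  exact ⟨Ideal.Quotient.mk I p, by simpa [hev] using hpT, by simpa [hev] using hpj⟩

theorem evaluation_code_parameters_general {F : Type*} [Field F] [DecidableEq F]
    {m n : ℕ} (I : Ideal (MvPolynomial (Fin m) F))
    (ρ : (MvPolynomial (Fin m) F ⧸ I) → WithBot ℕ)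
    (hρ : IsWeightFunction F ρ)
    (ρs : ℕ → ℕ)
    (hmono : ∀ i j, 1 ≤ i → i < j → ρs i < ρs j)
    (hrange : {x : ℕ | ∃ f : MvPolynomial (Fin m) F ⧸ I, f ≠ 0 ∧ ρ f = (x : WithBot ℕ)}
      = ρs '' {i | 1 ≤ i})
    (P : Fin n → (Fin m → F)) (hinj : Function.Injective P)
    (ev : (MvPolynomial (Fin m) F ⧸ I) →ₐ[F] (Fin n → F))
    (hev : ∀ f, ev (Ideal.Quotient.mk I f) = fun i => MvPolynomial.eval (P i) f)
    (l : ℕ) (hl : 1 ≤ l) :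
    (∀ f, ρ f ≤ (ρs l : WithBot ℕ) → ev f ≠ 0 → n - ρs l ≤ hammingNorm (ev f)) ∧
    (ρs l < n → Module.finrank F
      (Submodule.span F (⇑ev '' {f | ρ f ≤ (ρs l : WithBot ℕ)})) = l) := by
  have hsep := separatesFromFinsets_of_injective hinj ev hev
  have hdist : ∀ f, ρ f ≤ (ρs l : WithBot ℕ) → ev f ≠ 0 → n - ρs l ≤ hammingNorm (ev f) :=
    fun f hfl hf => by
      simpa using card_sub_le_hammingNorm hρ hsep (by rintro rfl; simp at hf) hfl
  refine ⟨hdist, fun hln => ?_⟩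
  obtain ⟨g, hg0, hgρ, hgl, hcover⟩ :=
    hρ.1.exists_family_enumerating_sublevel (fun i hi j _ => hmono i j hi) hrange hl
  refine hρ.1.finrank_span_image_sublevel ev.toLinearMap (fun f hfl hf => ?_) hg0 hgρ hgl hcover
  by_contra hf0
  have hweight := card_sub_le_hammingNorm hρ hsep hf0 hfl
  rw [show ev f = 0 from hf, hammingNorm_zero, Fintype.card_fin] at hweight
  omega

/-- The evaluation code `E_l = ev_P '' {f | ρ f ≤ ρ_l}` has minimum distance at
least `n - ρ_l`, and dimension `l` when `ρ_l < n`. -/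
theorem evaluation_code_parameters {F : Type*} [Field F] [Fintype F] [DecidableEq F]
    {m n : ℕ} (I : Ideal (MvPolynomial (Fin m) F))
    (ρ : (MvPolynomial (Fin m) F ⧸ I) → WithBot ℕ)
    (hρ : IsWeightFunction F ρ)
    (ρs : ℕ → ℕ)
    (hmono : ∀ i j, 1 ≤ i → i < j → ρs i < ρs j)
    (hrange : {x : ℕ | ∃ f : MvPolynomial (Fin m) F ⧸ I, f ≠ 0 ∧ ρ f = (x : WithBot ℕ)}
      = ρs '' {i | 1 ≤ i})
    (P : Fin n → (Fin m → F)) (hinj : Function.Injective P)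
    (hPV : ∀ i, ∀ f ∈ I, MvPolynomial.eval (P i) f = 0)
    (ev : (MvPolynomial (Fin m) F ⧸ I) →ₐ[F] (Fin n → F))
    (hev : ∀ f, ev (Ideal.Quotient.mk I f) = fun i => MvPolynomial.eval (P i) f)
    (l : ℕ) (hl : 1 ≤ l) :
    (∀ f, ρ f ≤ (ρs l : WithBot ℕ) → ev f ≠ 0 → n - ρs l ≤ hammingNorm (ev f)) ∧
    (ρs l < n → Module.finrank F
      (Submodule.span F (⇑ev '' {f | ρ f ≤ (ρs l : WithBot ℕ)})) = l) :=
  evaluation_code_parameters_general I ρ hρ ρs hmono hrange P hinj ev hev l hl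
end
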